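/- If U is a stable ordered-union ultrafilter on FIN, then U is selective: whenever ⟨A_a⃗⟩ ∈ U for all a⃗ ∈ FIN^[<∞], there is ⟨B⟩ ∈ U such that B/a⃗ ⪯ A_a⃗ for every a⃗ ∈ FIN^[<∞] with a⃗ ⪯ B. -/

import Mathlib

/-!
For each `m`, the ordered-union property gives `⟨A_m⟩ ∈ U` inside the intersection of the
finitely many `⟨A_a⃗⟩` with `a⃗` bounded by `m`; stability then gives `⟨C⟩ ∈ U` with
`⟨C/n(m)⟩ ⊆ ⟨A_m⟩`. Fix a monotone `d ≥ n` and cut every `s ∈ FIN` into `d`-clusters,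
joining consecutive points `b < a` of `s` when `a ≤ d b`. For `u < x` the number of clusters
of `u ∪ x` is the sum of those of `u` and `x` when `x` lies beyond `d(max u)`, and one less
otherwise. Two far-apart entries of a block sequence show that the sets with an even number
of clusters form a member of `U`, so there is `⟨B⟩ ∈ U` inside it, `⟨C⟩` and `⟨A_0⟩`. For
`a⃗ ⪯ B` with union `u` and `x ∈ ⟨B/a⃗⟩`, parity forces `x` beyond `d(max u) ≥ n(max u)`, hence
`x ∈ ⟨C/n(max u)⟩ ⊆ ⟨A_{max u}⟩ ⊆ ⟨A_a⃗⟩`.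
-/

namespace BlockPaper

variable {F : Type} [Field F]

/-- `X` is an infinite block sequence in `E = ⊕ₙ F`. -/
def IsBlock (X : ℕ → (ℕ →₀ F)) : Prop :=
  (∀ n, X n ≠ 0) ∧ ∀ n, ∀ i ∈ (X n).support, ∀ j ∈ (X (n + 1)).support, i < j

/-- `⟨X⟩`: the linear span of the entries of `X`, with `0` removed. -/
def spanSet (X : ℕ → (ℕ →₀ F)) : Set (ℕ →₀ F) :=
  {v | v ≠ 0 ∧ v ∈ Submodule.span F (Set.range X)}

/-- `⟨X/n⟩`: the span (minus `0`) of the entries of `X` whose supports lie entirely above `n`. -/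
def tailSpanSet (X : ℕ → (ℕ →₀ F)) (n : ℕ) : Set (ℕ →₀ F) :=
  {v | v ≠ 0 ∧ v ∈ Submodule.span F {x : ℕ →₀ F | (∃ k, X k = x) ∧ ∀ i ∈ x.support, n < i}}

/-- `X ⪯ Y`. -/
def PLE (X Y : ℕ → (ℕ →₀ F)) : Prop := spanSet X ⊆ spanSet Y

/-- `X ⪯* Y`. -/
def PLEs (X Y : ℕ → (ℕ →₀ F)) : Prop := ∃ n, tailSpanSet X n ⊆ spanSet Y

/-- A block filter on `E`: a proper filter of subsets of `E ∖ {0}` containing all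
finite-codimensional subspaces (minus `0`) and with a base of sets `⟨X⟩`, `X ∈ E^[∞]`. -/
structure BlockFilter (F : Type) [Field F] where
  sets : Set (Set (ℕ →₀ F))
  nonzero : ∀ S ∈ sets, ∀ v ∈ S, v ≠ 0
  proper : ∅ ∉ sets
  upward : ∀ S ∈ sets, ∀ T : Set (ℕ →₀ F), (∀ v ∈ T, v ≠ 0) → S ⊆ T → T ∈ sets
  inter : ∀ S ∈ sets, ∀ T ∈ sets, S ∩ T ∈ sets
  codim : ∀ V : Submodule F (ℕ →₀ F), Module.Finite F ((ℕ →₀ F) ⧸ V) →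
    {v : ℕ →₀ F | v ≠ 0 ∧ v ∈ V} ∈ sets
  blockBase : ∀ S ∈ sets, ∃ X : ℕ → (ℕ →₀ F),
    IsBlock X ∧ spanSet X ∈ sets ∧ spanSet X ⊆ S

/-- `D ⊆ E` is `𝓕`-dense. -/
def FDense (𝓕 : BlockFilter F) (D : Set (ℕ →₀ F)) : Prop :=
  ∀ X : ℕ → (ℕ →₀ F), IsBlock X → spanSet X ∈ 𝓕.sets →
    ∃ V : Submodule F (ℕ →₀ F), ¬ Module.Finite F V ∧
      (V : Set (ℕ →₀ F)) \ {0} ⊆ spanSet X ∩ D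

/-- `𝓕` is full: every `𝓕`-dense set belongs to `𝓕`. -/
def Full (𝓕 : BlockFilter F) : Prop :=
  ∀ D : Set (ℕ →₀ F), FDense 𝓕 D → D \ {0} ∈ 𝓕.sets

/-- `𝓕` is a `(p)`-filter. -/
def PFilter (𝓕 : BlockFilter F) : Prop :=
  ∀ Xs : ℕ → ℕ → (ℕ →₀ F), (∀ n, IsBlock (Xs n) ∧ spanSet (Xs n) ∈ 𝓕.sets) →
    ∃ X : ℕ → (ℕ →₀ F), IsBlock X ∧ spanSet X ∈ 𝓕.sets ∧ ∀ n, PLEs X (Xs n)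

/-- `𝓕` is a `(p⁺)`-filter: full and a `(p)`-filter. -/
def PPlus (𝓕 : BlockFilter F) : Prop := Full 𝓕 ∧ PFilter 𝓕

/-- A finite block sequence in `E`, as a list. -/
def IsBlockList (l : List (ℕ →₀ F)) : Prop :=
  (∀ v ∈ l, v ≠ 0) ∧
    l.Chain' (fun u v : ℕ →₀ F => ∀ i ∈ u.support, ∀ j ∈ v.support, i < j)

/-- `𝓕` is a strong `(p)`-filter: any family `(X_x⃗)` indexed by finite block sequences,
with each `⟨X_x⃗⟩ ∈ 𝓕`, has a diagonalization `X` with `X/x⃗ ⪯ X_x⃗` for all finite initial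
segments `x⃗` of `X`. -/
def StrongP (𝓕 : BlockFilter F) : Prop :=
  ∀ Xs : List (ℕ →₀ F) → ℕ → (ℕ →₀ F),
    (∀ l, IsBlockList l → IsBlock (Xs l) ∧ spanSet (Xs l) ∈ 𝓕.sets) →
    ∃ X : ℕ → (ℕ →₀ F), IsBlock X ∧ spanSet X ∈ 𝓕.sets ∧
      ∀ k : ℕ, PLE (fun m => X (m + k)) (Xs (List.ofFn fun i : Fin k => X i))

/-- The outcome of a strategy (for II) against a sequence of opposing moves:
the `k`-th value is the strategy applied to the first `k+1` opposing moves. -/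
def outcomeOf {α β : Type*} (st : List α → β) (Ys : ℕ → α) : ℕ → β :=
  fun k => st (List.ofFn fun i : Fin (k + 1) => Ys i)

/-- A legal move for player I in the Gowers game `G[X]`. -/
def LegalG (X Y : ℕ → (ℕ →₀ F)) : Prop := IsBlock Y ∧ PLE Y X

/-- A legal move for player I in the restricted Gowers game `G_𝓕[X]`. -/
def LegalGF (𝓕 : BlockFilter F) (X Y : ℕ → (ℕ →₀ F)) : Prop :=
  IsBlock Y ∧ PLE Y X ∧ spanSet Y ∈ 𝓕.sets

/-- `α` is a strategy for player II in a Gowers-type game whose legal moves for I are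
given by `legal`: against any sequence of legal I-moves, the outcome is a block
sequence whose `k`-th entry lies in the span of I's `k`-th move. -/
def IsStratII (legal : (ℕ → (ℕ →₀ F)) → Prop)
    (α : List (ℕ → (ℕ →₀ F)) → (ℕ →₀ F)) : Prop :=
  ∀ Ys : ℕ → ℕ → (ℕ →₀ F), (∀ k, legal (Ys k)) →
    IsBlock (outcomeOf α Ys) ∧ ∀ k, outcomeOf α Ys k ∈ spanSet (Ys k)

/-- `𝓕` is strategic. -/
def Strategic (𝓕 : BlockFilter F) : Prop :=
  ∀ X : ℕ → (ℕ →₀ F), IsBlock X → spanSet X ∈ 𝓕.sets →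
    ∀ α, IsStratII (LegalG X) α →
      ∃ Ys : ℕ → ℕ → (ℕ →₀ F), (∀ k, LegalG X (Ys k)) ∧
        spanSet (outcomeOf α Ys) ∈ 𝓕.sets

/-- `𝓕` is `+`-strategic. -/
def PlusStrategic (𝓕 : BlockFilter F) : Prop :=
  ∀ X : ℕ → (ℕ →₀ F), IsBlock X → spanSet X ∈ 𝓕.sets →
    ∀ α, IsStratII (LegalGF 𝓕 X) α →
      ∃ Ys : ℕ → ℕ → (ℕ →₀ F), (∀ k, LegalGF 𝓕 X (Ys k)) ∧
        spanSet (outcomeOf α Ys) ∈ 𝓕.sets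

/-- A legal finite position (list of II's moves so far) in a play where I follows `σ`. -/
def LegalPos (σ : List (ℕ →₀ F) → ℕ → (ℕ →₀ F)) (l : List (ℕ →₀ F)) : Prop :=
  IsBlockList l ∧ ∀ k, (h : k < l.length) → l.get ⟨k, h⟩ ∈ spanSet (σ (l.take k))

/-- `σ` is a strategy for player I in the restricted Gowers game `G_𝓕[X]`. -/
def IsStratIGF (𝓕 : BlockFilter F) (X : ℕ → (ℕ →₀ F))
    (σ : List (ℕ →₀ F) → ℕ → (ℕ →₀ F)) : Prop :=
  ∀ l, LegalPos σ l → LegalGF 𝓕 X (σ l)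

/-- `ys` is (the sequence of II's moves of) an infinite play against I's strategy `σ`
in a Gowers-type game; its outcome is `ys` itself. -/
def PlayAgainstI (σ : List (ℕ →₀ F) → ℕ → (ℕ →₀ F)) (ys : ℕ → (ℕ →₀ F)) : Prop :=
  IsBlock ys ∧ ∀ k, ys k ∈ spanSet (σ (List.ofFn fun i : Fin k => ys i))

/-- `ys` is an infinite play against I's strategy `σ` in the asymptotic game `F[X]`. -/
def PlayAgainstIAsymp (X : ℕ → (ℕ →₀ F)) (σ : List (ℕ →₀ F) → ℕ)
    (ys : ℕ → (ℕ →₀ F)) : Prop :=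
  IsBlock ys ∧ ∀ k, ys k ∈ spanSet X ∧
    ∀ i ∈ (ys k).support, σ (List.ofFn fun j : Fin k => ys j) < i

/-- `FIN`: nonempty finite subsets of `ℕ`. -/
abbrev FIN := {s : Finset ℕ // s.Nonempty}

/-- An infinite block sequence in `FIN`. -/
def IsBlockF (A : ℕ → Finset ℕ) : Prop :=
  (∀ n, (A n).Nonempty) ∧ ∀ n, ∀ i ∈ A n, ∀ j ∈ A (n + 1), i < j

/-- `⟨A⟩`: unions of finitely many (at least one) entries of `A`. -/
def finUnions (A : ℕ → Finset ℕ) : Set (Finset ℕ) :=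
  {b | ∃ G : Finset ℕ, G.Nonempty ∧ b = G.sup A}

/-- `⟨A/n⟩`: unions of finitely many entries of `A` contained in `(n, ∞)`. -/
def finUnionsAbove (A : ℕ → Finset ℕ) (n : ℕ) : Set (Finset ℕ) :=
  {b | ∃ G : Finset ℕ, G.Nonempty ∧ (∀ k ∈ G, ∀ i ∈ A k, n < i) ∧ b = G.sup A}

/-- `A ⪯ B` in `FIN`. -/
def PLEF (A B : ℕ → Finset ℕ) : Prop := finUnions A ⊆ finUnions B

/-- `A ⪯* B` in `FIN`. -/
def PLEsF (A B : ℕ → Finset ℕ) : Prop := ∃ n, finUnionsAbove A n ⊆ finUnions B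

/-- Lift a set of finite subsets of `ℕ` to a set of elements of `FIN`. -/
def liftFIN (S : Set (Finset ℕ)) : Set FIN := {a | (a : Finset ℕ) ∈ S}

/-- `U` is an ordered-union ultrafilter on `FIN`. -/
def OrderedUnion (U : Ultrafilter FIN) : Prop :=
  ∀ S ∈ U, ∃ A : ℕ → Finset ℕ, IsBlockF A ∧
    liftFIN (finUnions A) ∈ U ∧ liftFIN (finUnions A) ⊆ S

/-- `U` is stable. -/
def Stable (U : Ultrafilter FIN) : Prop :=
  ∀ As : ℕ → ℕ → Finset ℕ, (∀ n, IsBlockF (As n) ∧ liftFIN (finUnions (As n)) ∈ U) →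
    ∃ B : ℕ → Finset ℕ, IsBlockF B ∧ liftFIN (finUnions B) ∈ U ∧ ∀ n, PLEsF B (As n)

/-- `supp(X)`: the sequence of supports of the entries of `X`. -/
def suppSeq (X : ℕ → (ℕ →₀ F)) : ℕ → Finset ℕ := fun k => (X k).support

/-- `supp(𝓕)`: the collection of `A ⊆ FIN` containing `{supp v : v ∈ S}` for some `S ∈ 𝓕`. -/
def suppFilter (𝓕 : BlockFilter F) : Set (Set FIN) :=
  {A | ∃ S ∈ 𝓕.sets, ∀ a : FIN, (∃ v ∈ S, (a : Finset ℕ) = v.support) → a ∈ A}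

/-- A finite block sequence in `FIN`, as a list. -/
def IsBlockListF (l : List (Finset ℕ)) : Prop :=
  (∀ a ∈ l, a.Nonempty) ∧
    l.Chain' (fun a b : Finset ℕ => ∀ i ∈ a, ∀ j ∈ b, i < j)

end BlockPaper
open BlockPaper

/-- `⟨a⃗⟩` for a finite block sequence `a⃗` in `FIN`: unions of finitely many (at least
one) entries of `a⃗`. -/
def finUnionsL (l : List (Finset ℕ)) : Set (Finset ℕ) :=
  {b | ∃ G : Finset ℕ, G.Nonempty ∧ (∀ k ∈ G, k < l.length) ∧
    b = G.sup (fun k => l.getD k ∅)}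

/-- `⟨B/a⃗⟩`: unions of finitely many entries of `B` lying entirely above all entries
of `a⃗`. -/
def finUnionsAboveL (B : ℕ → Finset ℕ) (l : List (Finset ℕ)) : Set (Finset ℕ) :=
  {b | ∃ G : Finset ℕ, G.Nonempty ∧ (∀ k ∈ G, ∀ a ∈ l, ∀ i ∈ a, ∀ j ∈ B k, i < j) ∧
    b = G.sup B}

namespace BlockPaper

lemma IsBlockF.le_of_mem {B : ℕ → Finset ℕ} (hB : IsBlockF B) :
    ∀ n, ∀ j ∈ B n, n ≤ j
  | 0, _, _ => Nat.zero_le _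
  | n + 1, j, hj => by
    obtain ⟨i, hi⟩ := hB.1 n
    exact (hB.le_of_mem n i hi).trans_lt (hB.2 n i hi j hj)

lemma IsBlockF.lt_of_lt {B : ℕ → Finset ℕ} (hB : IsBlockF B) {m : ℕ} :
    ∀ {n}, m < n → ∀ i ∈ B m, ∀ j ∈ B n, i < j
  | n + 1, hmn, i, hi, j, hj => by
    rcases (Nat.lt_succ_iff_lt_or_eq.1 hmn) with hmn | rfl
    · obtain ⟨t, ht⟩ := hB.1 n
      exact (hB.lt_of_lt hmn i hi t ht).trans (hB.2 n t ht j hj)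
    · exact hB.2 m i hi j hj

lemma IsBlockF.nonempty_of_mem_finUnions {B : ℕ → Finset ℕ} (hB : IsBlockF B) {x : Finset ℕ}
    (hx : x ∈ finUnions B) : x.Nonempty := by
  obtain ⟨G, ⟨k, hk⟩, rfl⟩ := hx
  exact (hB.1 k).mono (Finset.le_sup hk)

lemma IsBlockF.mem_of_liftFIN_subset {B : ℕ → Finset ℕ} (hB : IsBlockF B) {S : Set FIN}
    (hS : liftFIN (finUnions B) ⊆ S) {x : Finset ℕ} (hx : x ∈ finUnions B) :
    (⟨x, hB.nonempty_of_mem_finUnions hx⟩ : FIN) ∈ S :=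
  hS hx

lemma mem_finUnions_self (B : ℕ → Finset ℕ) (k : ℕ) : B k ∈ finUnions B :=
  ⟨{k}, Finset.singleton_nonempty k, Finset.sup_singleton.symm⟩

lemma union_mem_finUnions {B : ℕ → Finset ℕ} {x y : Finset ℕ}
    (hx : x ∈ finUnions B) (hy : y ∈ finUnions B) : x ∪ y ∈ finUnions B := by
  obtain ⟨G, hG, rfl⟩ := hx
  obtain ⟨H, -, rfl⟩ := hy
  exact ⟨G ∪ H, hG.mono Finset.subset_union_left, Finset.sup_union.symm⟩

lemma mem_finUnionsAbove_of_lt {B : ℕ → Finset ℕ} {x : Finset ℕ} {n : ℕ}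
    (hx : x ∈ finUnions B) (hn : ∀ j ∈ x, n < j) : x ∈ finUnionsAbove B n := by
  obtain ⟨G, hG, rfl⟩ := hx
  exact ⟨G, hG, fun k hk j hj => hn j (Finset.mem_sup.2 ⟨k, hk, hj⟩), rfl⟩

lemma IsBlockListF.le_of_mem_getElem {l : List (Finset ℕ)} (hl : IsBlockListF l) :
    ∀ k (hk : k < l.length), ∀ j ∈ l[k], k ≤ j
  | 0, _, _, _ => Nat.zero_le _
  | k + 1, hk, j, hj => by
    obtain ⟨i, hi⟩ := hl.1 _ (l.getElem_mem (Nat.lt_of_succ_lt hk))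
    exact (hl.le_of_mem_getElem k _ i hi).trans_lt
      (List.isChain_iff_getElem.1 hl.2 k hk i hi j hj)

lemma IsBlockListF.length_le {l : List (Finset ℕ)} (hl : IsBlockListF l) {m : ℕ}
    (hm : ∀ a ∈ l, ∀ i ∈ a, i ≤ m) : l.length ≤ m + 1 := by
  rcases Nat.eq_zero_or_pos l.length with h | h
  · omega
  obtain ⟨j, hj⟩ := hl.1 _ (l.getElem_mem (Nat.sub_one_lt_of_lt h))
  have := hl.le_of_mem_getElem _ _ j hj
  have := hm _ (l.getElem_mem _) j hj
  omega

lemma finite_setOf_length_le_forall_mem {α : Type*} {S : Set α} (hS : S.Finite) (n : ℕ) :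
    {l : List α | l.length ≤ n ∧ ∀ a ∈ l, a ∈ S}.Finite := by
  have := hS.to_subtype
  refine ((List.finite_length_le S n).image (List.map Subtype.val)).subset ?_
  rintro l ⟨hl, hlS⟩
  exact ⟨l.pmap Subtype.mk hlS, by simpa using hl, by simp [List.map_pmap]⟩

lemma finite_setOf_isBlockListF_le (m : ℕ) :
    {l | IsBlockListF l ∧ ∀ a ∈ l, ∀ i ∈ a, i ≤ m}.Finite := by
  refine (finite_setOf_length_le_forall_mem
    (Finset.range (m + 1)).powerset.finite_toSet (m + 1)).subset ?_
  rintro l ⟨hl, hm⟩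
  exact ⟨hl.length_le hm, fun a ha => Finset.mem_coe.2 <| Finset.mem_powerset.2 fun i hi =>
    Finset.mem_range.2 (Nat.lt_succ_of_le (hm a ha i hi))⟩

def clusterStarts (d : ℕ → ℕ) (s : Finset ℕ) : Finset ℕ :=
  {a ∈ s | ∀ b ∈ s, b < a → d b < a}

lemma mem_clusterStarts {d : ℕ → ℕ} {s : Finset ℕ} {a : ℕ} :
    a ∈ clusterStarts d s ↔ a ∈ s ∧ ∀ b ∈ s, b < a → d b < a :=
  Finset.mem_filter

lemma min'_mem_clusterStarts (d : ℕ → ℕ) {s : Finset ℕ} (hs : s.Nonempty) :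
    s.min' hs ∈ clusterStarts d s :=
  mem_clusterStarts.2 ⟨s.min'_mem hs, fun b hb hlt => absurd (s.min'_le b hb) hlt.not_ge⟩

section Union

variable {d : ℕ → ℕ} {u x : Finset ℕ}

lemma clusterStarts_union (hux : ∀ i ∈ u, ∀ j ∈ x, i < j) :
    clusterStarts d (u ∪ x) =
      clusterStarts d u ∪ {a ∈ clusterStarts d x | ∀ b ∈ u, d b < a} := by
  ext a
  simp only [mem_clusterStarts, Finset.mem_filter, Finset.mem_union]
  constructor
  · rintro ⟨ha | ha, h⟩
    · exact Or.inl ⟨ha, fun b hb => h b (Or.inl hb)⟩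
    · exact Or.inr
        ⟨⟨ha, fun b hb => h b (Or.inr hb)⟩, fun b hb => h b (Or.inl hb) (hux b hb a ha)⟩
  · rintro (⟨ha, h⟩ | ⟨⟨ha, h⟩, hu⟩)
    · refine ⟨Or.inl ha, fun b hb hba => hb.elim (fun hb => h b hb hba) fun hb => ?_⟩
      exact absurd (hux a ha b hb) hba.not_gt
    · exact ⟨Or.inr ha, fun b hb hba => hb.elim (fun hb => hu b hb) fun hb => h b hb hba⟩

lemma disjoint_clusterStarts (hux : ∀ i ∈ u, ∀ j ∈ x, i < j) (t : Finset ℕ)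
    (ht : t ⊆ clusterStarts d x) : Disjoint (clusterStarts d u) t :=
  Finset.disjoint_left.2 fun a hau hat =>
    (hux a (mem_clusterStarts.1 hau).1 a (mem_clusterStarts.1 (ht hat)).1).false

lemma card_clusterStarts_union_of_far (hux : ∀ i ∈ u, ∀ j ∈ x, i < j)
    (hfar : ∀ i ∈ u, ∀ j ∈ x, d i < j) :
    (clusterStarts d (u ∪ x)).card = (clusterStarts d u).card + (clusterStarts d x).card := by
  rw [clusterStarts_union hux, Finset.filter_true_of_mem fun a ha b hb =>
      hfar b hb a (mem_clusterStarts.1 ha).1,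
    Finset.card_union_of_disjoint (disjoint_clusterStarts hux _ subset_rfl)]

/-- When `x` starts within `d`-reach of `u`, the first cluster of `x` merges with the last
one of `u`. -/
lemma card_clusterStarts_union_of_near (hd : Monotone d) (hux : ∀ i ∈ u, ∀ j ∈ x, i < j)
    (hnear : ∃ i ∈ u, ∃ j ∈ x, j ≤ d i) :
    (clusterStarts d (u ∪ x)).card + 1 =
      (clusterStarts d u).card + (clusterStarts d x).card := by
  obtain ⟨i, hi, j, hj, hji⟩ := hnear
  have hx : x.Nonempty := ⟨j, hj⟩
  have herase :
      {a ∈ clusterStarts d x | ∀ b ∈ u, d b < a} = (clusterStarts d x).erase (x.min' hx) := by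
    ext a
    simp only [Finset.mem_filter, Finset.mem_erase]
    constructor
    · rintro ⟨ha, hfar⟩
      exact ⟨fun hmin => (hfar i hi).not_ge (hmin ▸ (x.min'_le j hj).trans hji), ha⟩
    · rintro ⟨hne, ha⟩
      have hmin : x.min' hx < a := (x.min'_le a (mem_clusterStarts.1 ha).1).lt_of_ne' hne
      exact ⟨ha, fun b hb => (hd (hux b hb _ (x.min'_mem hx)).le).trans_lt
        ((mem_clusterStarts.1 ha).2 _ (x.min'_mem hx) hmin)⟩
  rw [clusterStarts_union hux, herase, Finset.card_union_of_disjoint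
      (disjoint_clusterStarts hux _ (Finset.erase_subset _ _)),
    add_assoc, Finset.card_erase_add_one (min'_mem_clusterStarts d hx)]

lemma far_of_even_card_clusterStarts (hd : Monotone d) (hux : ∀ i ∈ u, ∀ j ∈ x, i < j)
    (hu : Even (clusterStarts d u).card) (hx : Even (clusterStarts d x).card)
    (hunion : Even (clusterStarts d (u ∪ x)).card) : ∀ i ∈ u, ∀ j ∈ x, d i < j := by
  by_contra! hnear
  have := card_clusterStarts_union_of_near hd hux hnear
  obtain ⟨p, hp⟩ := hu
  obtain ⟨q, hq⟩ := hx
  obtain ⟨r, hr⟩ := hunion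
  omega

end Union

lemma OrderedUnion.setOf_even_card_clusterStarts_mem {U : Ultrafilter FIN}
    (hOU : OrderedUnion U) (d : ℕ → ℕ) :
    {a : FIN | Even (clusterStarts d a).card} ∈ U := by
  by_contra h
  obtain ⟨B, hB, -, hBodd⟩ := hOU _ (Ultrafilter.compl_mem_iff_notMem.2 h)
  have hodd : ∀ x ∈ finUnions B, ¬ Even (clusterStarts d x).card :=
    fun x hx => hB.mem_of_liftFIN_subset hBodd hx
  set k := (B 0).sup d + 1
  have hfar : ∀ i ∈ B 0, ∀ j ∈ B k, d i < j := fun i hi j hj =>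
    (Finset.le_sup hi).trans_lt (hB.le_of_mem k j hj)
  have hunion := card_clusterStarts_union_of_far (hB.lt_of_lt (Nat.succ_pos _ : 0 < k)) hfar
  refine hodd _ (union_mem_finUnions (mem_finUnions_self B 0) (mem_finUnions_self B k)) ?_
  rw [hunion, Nat.even_add]
  exact iff_of_false (hodd _ (mem_finUnions_self B 0)) (hodd _ (mem_finUnions_self B k))

lemma OrderedUnion.exists_finUnions_subset_of_le {U : Ultrafilter FIN} (hOU : OrderedUnion U)
    (As : List (Finset ℕ) → ℕ → Finset ℕ)
    (hAs : ∀ l, IsBlockListF l → liftFIN (finUnions (As l)) ∈ U) (m : ℕ) :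
    ∃ A, IsBlockF A ∧ liftFIN (finUnions A) ∈ U ∧
      ∀ l, IsBlockListF l → (∀ a ∈ l, ∀ i ∈ a, i ≤ m) →
        finUnions A ⊆ finUnions (As l) := by
  obtain ⟨A, hA, hAU, hsub⟩ :=
    hOU _ ((Filter.biInter_mem (finite_setOf_isBlockListF_le m)).2 fun l hl => hAs l hl.1)
  refine ⟨A, hA, hAU, fun l hl hm x hx => ?_⟩
  exact Set.mem_iInter₂.1 (hA.mem_of_liftFIN_subset hsub hx) l ⟨hl, hm⟩

lemma mem_sup_getD_iff {l : List (Finset ℕ)} {i : ℕ} :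
    i ∈ (Finset.range l.length).sup (l.getD · ∅) ↔ ∃ a ∈ l, i ∈ a := by
  simp only [Finset.mem_sup, Finset.mem_range, List.mem_iff_getElem]
  exact ⟨fun ⟨k, hk, hi⟩ => ⟨_, ⟨k, hk, rfl⟩, by simpa [hk] using hi⟩,
    fun ⟨_, ⟨k, hk, ha⟩, hi⟩ => ⟨k, hk, by simpa [hk, ha] using hi⟩⟩

lemma sup_getD_mem_finUnionsL {l : List (Finset ℕ)} (hl : l ≠ []) :
    (Finset.range l.length).sup (l.getD · ∅) ∈ finUnionsL l :=
  ⟨_, Finset.nonempty_range_iff.2 (List.length_pos_iff.2 hl).ne', fun _ => Finset.mem_range.1,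
    rfl⟩

lemma finUnionsAboveL_subset (B : ℕ → Finset ℕ) (l : List (Finset ℕ)) :
    finUnionsAboveL B l ⊆ finUnions B :=
  fun _ ⟨G, hG, _, hx⟩ => ⟨G, hG, hx⟩

lemma lt_of_mem_finUnionsAboveL {B : ℕ → Finset ℕ} {l : List (Finset ℕ)} {x a : Finset ℕ}
    (hx : x ∈ finUnionsAboveL B l) (ha : a ∈ l) : ∀ i ∈ a, ∀ j ∈ x, i < j := by
  obtain ⟨G, -, hG, rfl⟩ := hx
  intro i hi j hj
  obtain ⟨k, hk, hj⟩ := Finset.mem_sup.1 hj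
  exact hG k hk a ha i hi j hj

end BlockPaper

/-- A stable ordered-union ultrafilter on `FIN` is selective. -/
theorem stmt7 (U : Ultrafilter FIN) (hOU : OrderedUnion U) (hSt : Stable U)
    (As : List (Finset ℕ) → ℕ → Finset ℕ)
    (hAs : ∀ l, IsBlockListF l → IsBlockF (As l) ∧ liftFIN (finUnions (As l)) ∈ U) :
    ∃ B : ℕ → Finset ℕ, IsBlockF B ∧ liftFIN (finUnions B) ∈ U ∧
      ∀ l, IsBlockListF l → finUnionsL l ⊆ finUnions B →
        finUnionsAboveL B l ⊆ finUnions (As l) := by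
  choose A hA hAU hAAs using hOU.exists_finUnions_subset_of_le As fun l hl => (hAs l hl).2
  obtain ⟨C, -, hCU, hCA⟩ := hSt A fun m => ⟨hA m, hAU m⟩
  choose n hn using hCA
  set d : ℕ → ℕ := fun m => (Finset.range (m + 1)).sup n
  have hd : Monotone d := fun a b hab =>
    Finset.sup_mono (Finset.range_subset_range.2 (Nat.succ_le_succ hab))
  have hnd : ∀ m, n m ≤ d m := fun m => Finset.le_sup (Finset.self_mem_range_succ m)
  obtain ⟨B, hB, hBU, hBsub⟩ := hOU _ (Filter.inter_mem
    (hOU.setOf_even_card_clusterStarts_mem d) (Filter.inter_mem hCU (hAU 0)))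
  have hBsub' : ∀ x ∈ finUnions B,
      Even (clusterStarts d x).card ∧ x ∈ finUnions C ∧ x ∈ finUnions (A 0) :=
    fun x hx => hB.mem_of_liftFIN_subset hBsub hx
  refine ⟨B, hB, hBU, fun l hl hlB x hx => ?_⟩
  have hxB := finUnionsAboveL_subset B l hx
  rcases eq_or_ne l [] with rfl | hl0
  · exact hAAs 0 [] hl (by simp) (hBsub' x hxB).2.2
  set u := (Finset.range l.length).sup (l.getD · ∅)
  have huB : u ∈ finUnions B := hlB (sup_getD_mem_finUnionsL hl0)
  have hu : u.Nonempty := hB.nonempty_of_mem_finUnions huB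
  have hux : ∀ i ∈ u, ∀ j ∈ x, i < j := fun i hi => by
    obtain ⟨a, ha, hi⟩ := mem_sup_getD_iff.1 hi
    exact lt_of_mem_finUnionsAboveL hx ha i hi
  have hfar := far_of_even_card_clusterStarts hd hux (hBsub' u huB).1 (hBsub' x hxB).1
    (hBsub' _ (union_mem_finUnions huB hxB)).1
  have hlu : ∀ a ∈ l, ∀ i ∈ a, i ≤ u.max' hu := fun a ha i hi =>
    u.le_max' i (mem_sup_getD_iff.2 ⟨a, ha, hi⟩)
  refine hAAs (u.max' hu) l hl hlu
    (hn _ (mem_finUnionsAbove_of_lt (hBsub' x hxB).2.1 fun j hj => ?_))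
  exact (hnd _).trans_lt (hfar _ (u.max'_mem hu) j hj)
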